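/- arXiv:2309.00361 — 3 statements merged into one kernel-verified Lean document; each statement's English description precedes it below -/
import Mathlib

section
/- Correctness of temporal core decomposition: for [ts,te] ⊆ [ts',te'], the k-core of the projected graph G_[ts,te] equals the k-core of the graph obtained by first taking the k-core of G_[ts',te'] and then restricting its edges to timestamps in [ts,te]. -/
/-!
The `k`-core of an edge set `A` only depends on the edges of `A` joining two core vertices:
deleting any other edges keeps every core vertex at degree `≥ k` inside the old core, and
deleting edges can only shrink the core. Since `[ts, te] ⊆ [ts', te']`, the core of
`G_[ts,te]` lies in the core of `G_[ts',te']` by monotonicity, so each edge of `G_[ts,te]`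
between its core vertices survives in the restricted `k`-core of `G_[ts',te']`.
-/

abbrev TEdge : Type := ℕ × ℕ × ℤ

/-- Projection of a temporal edge set over time interval [a,b]. -/
def projE (E : Finset TEdge) (a b : ℤ) : Finset TEdge :=
  E.filter (fun e => a ≤ e.2.2 ∧ e.2.2 ≤ b)

def verts (E : Finset TEdge) : Finset ℕ :=
  E.image (fun e => e.1) ∪ E.image (fun e => e.2.1)

/-- Distinct neighbors of `v` inside vertex set `S` via edges of `E`. -/
def nbrs (E : Finset TEdge) (S : Finset ℕ) (v : ℕ) : Finset ℕ :=
  S.filter (fun u => u ≠ v ∧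
    (E.filter (fun e => (e.1 = u ∧ e.2.1 = v) ∨ (e.1 = v ∧ e.2.1 = u))).Nonempty)

/-- `S` is a `k`-core candidate: every vertex of `S` has ≥ k distinct neighbors in `S`. -/
def isCoreSet (E : Finset TEdge) (k : ℕ) (S : Finset ℕ) : Prop :=
  ∀ v ∈ S, k ≤ (nbrs E S v).card

instance (E : Finset TEdge) (k : ℕ) : DecidablePred (isCoreSet E k) := fun S => by
  unfold isCoreSet; infer_instance

/-- The `k`-core vertex set of a temporal edge set: union of all candidates. -/
def core (E : Finset TEdge) (k : ℕ) : Finset ℕ :=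
  ((verts E).powerset.filter (isCoreSet E k)).sup id

/-- The edges of `E` induced among the `k`-core vertices. -/
def coreEdges (E : Finset TEdge) (k : ℕ) : Finset TEdge :=
  E.filter (fun e => e.1 ∈ core E k ∧ e.2.1 ∈ core E k)

/-- Vertices of the temporal k-core of interval [a,b]. -/
def coreV (E : Finset TEdge) (k : ℕ) (a b : ℤ) : Finset ℕ :=
  core (projE E a b) k

/-- Temporal edges of the temporal k-core of interval [a,b]. -/
def coreE (E : Finset TEdge) (k : ℕ) (a b : ℤ) : Finset TEdge :=
  coreEdges (projE E a b) k

/-- Two intervals induce identical temporal k-cores (same vertices and temporal edges). -/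
def identCore (E : Finset TEdge) (k : ℕ) (a b a' b' : ℤ) : Prop :=
  coreV E k a b = coreV E k a' b' ∧ coreE E k a b = coreE E k a' b'

lemma mem_core_iff (E : Finset TEdge) (k : ℕ) (v : ℕ) :
    v ∈ core E k ↔ ∃ S ⊆ verts E, isCoreSet E k S ∧ v ∈ S := by
  simp only [core, Finset.mem_sup, Finset.mem_filter, Finset.mem_powerset, id, and_assoc]

lemma subset_core {E : Finset TEdge} {k : ℕ} {S : Finset ℕ}
    (hS : S ⊆ verts E) (hcore : isCoreSet E k S) : S ⊆ core E k :=
  fun _ hv => (mem_core_iff E k _).2 ⟨S, hS, hcore, hv⟩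

lemma core_subset_verts (E : Finset TEdge) (k : ℕ) : core E k ⊆ verts E := by
  intro v hv
  obtain ⟨S, hS, -, hvS⟩ := (mem_core_iff E k v).1 hv
  exact hS hvS

lemma verts_mono {E E' : Finset TEdge} (h : E ⊆ E') : verts E ⊆ verts E' :=
  Finset.union_subset_union (Finset.image_subset_image h) (Finset.image_subset_image h)

lemma mem_verts_of_mem_nbrs {E : Finset TEdge} {S : Finset ℕ} {u v : ℕ}
    (hu : u ∈ nbrs E S v) : v ∈ verts E := by
  obtain ⟨-, -, e, he⟩ := Finset.mem_filter.1 hu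
  obtain ⟨heE, hends⟩ := Finset.mem_filter.1 he
  simp only [verts, Finset.mem_union, Finset.mem_image]
  rcases hends with ⟨-, rfl⟩ | ⟨rfl, -⟩
  · exact Or.inr ⟨e, heE, rfl⟩
  · exact Or.inl ⟨e, heE, rfl⟩

lemma nbrs_subset_nbrs {E B : Finset TEdge} {S : Finset ℕ} {v : ℕ} (hv : v ∈ S)
    (hB : ∀ e ∈ E, e.1 ∈ S → e.2.1 ∈ S → e ∈ B) : nbrs E S v ⊆ nbrs B S v := by
  intro u hu
  obtain ⟨huS, hne, e, he⟩ := Finset.mem_filter.1 hu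
  obtain ⟨heE, hends⟩ := Finset.mem_filter.1 he
  have heB : e ∈ B := by
    rcases hends with ⟨h1, h2⟩ | ⟨h1, h2⟩
    · exact hB e heE (h1 ▸ huS) (h2 ▸ hv)
    · exact hB e heE (h1 ▸ hv) (h2 ▸ huS)
  exact Finset.mem_filter.2 ⟨huS, hne, e, Finset.mem_filter.2 ⟨heB, hends⟩⟩

lemma isCoreSet.mono {E E' : Finset TEdge} {k : ℕ} {S : Finset ℕ} (h : E ⊆ E')
    (hS : isCoreSet E k S) : isCoreSet E' k S :=
  fun v hv => (hS v hv).trans <| Finset.card_le_card <|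
    nbrs_subset_nbrs hv fun _ he _ _ => h he

lemma core_mono {E E' : Finset TEdge} (h : E ⊆ E') (k : ℕ) : core E k ⊆ core E' k := by
  intro v hv
  obtain ⟨S, hS, hcore, hvS⟩ := (mem_core_iff E k v).1 hv
  exact subset_core (hS.trans (verts_mono h)) (hcore.mono h) hvS

lemma isCoreSet_core (E : Finset TEdge) (k : ℕ) : isCoreSet E k (core E k) := by
  intro v hv
  obtain ⟨S, hS, hcore, hvS⟩ := (mem_core_iff E k v).1 hv
  exact (hcore v hvS).trans <| Finset.card_le_card <|
    Finset.filter_subset_filter _ (subset_core hS hcore)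

lemma mem_coreEdges {E : Finset TEdge} {k : ℕ} {e : TEdge} :
    e ∈ coreEdges E k ↔ e ∈ E ∧ e.1 ∈ core E k ∧ e.2.1 ∈ core E k :=
  Finset.mem_filter

lemma coreEdges_subset (E : Finset TEdge) (k : ℕ) : coreEdges E k ⊆ E :=
  Finset.filter_subset _ _

lemma coreEdges_mono {E E' : Finset TEdge} (h : E ⊆ E') (k : ℕ) :
    coreEdges E k ⊆ coreEdges E' k := fun _ he =>
  let ⟨heE, h1, h2⟩ := mem_coreEdges.1 he
  mem_coreEdges.2 ⟨h heE, core_mono h k h1, core_mono h k h2⟩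

lemma core_zero (E : Finset TEdge) : core E 0 = verts E :=
  (core_subset_verts E 0).antisymm (subset_core subset_rfl fun _ _ => Nat.zero_le _)

/-- For `k > 0` every core vertex has a neighbour in the core; for `k = 0` the core is all of
`verts E` and so carries every edge. -/
lemma core_subset_verts_coreEdges (E : Finset TEdge) (k : ℕ) :
    core E k ⊆ verts (coreEdges E k) := by
  rcases Nat.eq_zero_or_pos k with rfl | hk
  · have hall : coreEdges E 0 = E := Finset.filter_true_of_mem fun e he => by
      simp only [core_zero, verts, Finset.mem_union, Finset.mem_image]
      exact ⟨Or.inl ⟨e, he, rfl⟩, Or.inr ⟨e, he, rfl⟩⟩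
    rw [hall, core_zero]
  · intro v hv
    obtain ⟨u, hu⟩ := Finset.card_pos.1 (hk.trans_le (isCoreSet_core E k v hv))
    refine mem_verts_of_mem_nbrs (nbrs_subset_nbrs (S := core E k) hv ?_ hu)
    exact fun e he h1 h2 => mem_coreEdges.2 ⟨he, h1, h2⟩

theorem core_eq_and_coreEdges_eq_of_subset {A B : Finset TEdge} {k : ℕ} (hBA : B ⊆ A)
    (hAB : coreEdges A k ⊆ B) : core A k = core B k ∧ coreEdges A k = coreEdges B k := by
  have hcore : core A k = core B k := by
    refine (subset_core ((core_subset_verts_coreEdges A k).trans (verts_mono hAB)) ?_).antisymm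
      (core_mono hBA k)
    intro v hv
    exact (isCoreSet_core A k v hv).trans <| Finset.card_le_card <|
      nbrs_subset_nbrs hv fun e he h1 h2 => hAB (mem_coreEdges.2 ⟨he, h1, h2⟩)
  refine ⟨hcore, Finset.Subset.antisymm (fun e he => ?_) (fun e he => ?_)⟩
  · exact mem_coreEdges.2 ⟨hAB he, hcore ▸ (mem_coreEdges.1 he).2⟩
  · obtain ⟨heB, hends⟩ := mem_coreEdges.1 he
    exact mem_coreEdges.2 ⟨hBA heB, hcore ▸ hends⟩

lemma mem_projE {E : Finset TEdge} {a b : ℤ} {e : TEdge} :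
    e ∈ projE E a b ↔ e ∈ E ∧ a ≤ e.2.2 ∧ e.2.2 ≤ b :=
  Finset.mem_filter

lemma projE_subset (E : Finset TEdge) (a b : ℤ) : projE E a b ⊆ E :=
  Finset.filter_subset _ _

lemma projE_mono {E E' : Finset TEdge} (h : E ⊆ E') (a b : ℤ) : projE E a b ⊆ projE E' a b :=
  Finset.filter_subset_filter _ h

lemma projE_subset_projE {a b a' b' : ℤ} (ha : a' ≤ a) (hb : b ≤ b') (E : Finset TEdge) :
    projE E a b ⊆ projE E a' b' := fun _ he =>
  let ⟨heE, h1, h2⟩ := mem_projE.1 he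
  mem_projE.2 ⟨heE, ha.trans h1, h2.trans hb⟩

/-- correctness of temporal core decomposition: for [ts,te] ⊆ [ts',te'],
the k-core of G_[ts,te] equals the k-core of (the k-core of G_[ts',te'] with its edges
restricted to timestamps in [ts,te]), both as vertex sets and with induced edges. -/
theorem stmt_5 (E : Finset TEdge) (k : ℕ) (ts te ts' te' : ℤ)
    (h1 : ts' ≤ ts) (h2 : te ≤ te') :
    core (projE E ts te) k = core (projE (coreE E k ts' te') ts te) k ∧
    coreEdges (projE E ts te) k = coreEdges (projE (coreE E k ts' te') ts te) k := by
  apply core_eq_and_coreEdges_eq_of_subset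
  · exact projE_mono ((coreEdges_subset _ k).trans (projE_subset E ts' te')) ts te
  · intro e he
    have hts := (mem_projE.1 (coreEdges_subset _ k he)).2
    exact mem_projE.2 ⟨coreEdges_mono (projE_subset_projE h1 h2 E) k he, hts⟩
end

section
/- Every interval inducing a given temporal k-core lies in a rectangle bounded by the TTI and some LTI: if T^k_[a,b] is identical to a fixed nonempty core T with TTI [ts,te], then there exists a loosest time interval [ts',te'] of T (i.e., a maximal subinterval of the query range inducing a core identical to T) such that ts' ≤ a ≤ ts and te ≤ b ≤ te'. -/
/-- `[ts',te']` is a loosest time interval (within query range `[Ts,Te]`) of the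
temporal k-core induced by `[ts,te]`: it induces an identical core and is maximal
among subintervals of `[Ts,Te]` doing so. -/
def isLTI (E : Finset TEdge) (k : ℕ) (Ts Te ts te ts' te' : ℤ) : Prop :=
  Ts ≤ ts' ∧ ts' ≤ te' ∧ te' ≤ Te ∧ identCore E k ts' te' ts te ∧
    ∀ a b : ℤ, Ts ≤ a → a ≤ ts' → te' ≤ b → b ≤ Te →
      identCore E k a b ts te → a = ts' ∧ b = te'


/-!
Any interval inducing the core contains the timestamps of all core edges, hence contains the TTI.
Among the finitely many subintervals of `[Ts,Te]` that contain `[a,b]` and induce the same core,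
one of maximal length exists, and it cannot be strictly enlarged: that is the required LTI.
-/

theorem exists_maximal_interval_containing (P : ℤ → ℤ → Prop) {Ts Te a b : ℤ}
    (hTa : Ts ≤ a) (hbT : b ≤ Te) (hP : P a b) :
    ∃ a' b', Ts ≤ a' ∧ a' ≤ a ∧ b ≤ b' ∧ b' ≤ Te ∧ P a' b' ∧
      ∀ a₀ b₀, Ts ≤ a₀ → a₀ ≤ a' → b' ≤ b₀ → b₀ ≤ Te → P a₀ b₀ → a₀ = a' ∧ b₀ = b' := by
  classical
  set F := (Finset.Icc Ts a ×ˢ Finset.Icc b Te).filter (fun p => P p.1 p.2)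
  have mem_F {p : ℤ × ℤ} : p ∈ F ↔ (Ts ≤ p.1 ∧ p.1 ≤ a) ∧ (b ≤ p.2 ∧ p.2 ≤ Te) ∧ P p.1 p.2 := by
    simp only [F, Finset.mem_filter, Finset.mem_product, Finset.mem_Icc, and_assoc]
  obtain ⟨⟨a', b'⟩, hF, hwidest⟩ :=
    F.exists_max_image (fun p => p.2 - p.1) ⟨(a, b), mem_F.2 ⟨⟨hTa, le_rfl⟩, ⟨le_rfl, hbT⟩, hP⟩⟩
  obtain ⟨⟨hTa', ha'⟩, ⟨hb', hb'T⟩, hP'⟩ := mem_F.1 hF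
  refine ⟨a', b', hTa', ha', hb', hb'T, hP', fun a₀ b₀ hTa₀ ha₀ hb₀ hb₀T hP₀ => ?_⟩
  have := hwidest (a₀, b₀) (mem_F.2 ⟨⟨hTa₀, ha₀.trans ha'⟩, ⟨hb'.trans hb₀, hb₀T⟩, hP₀⟩)
  constructor <;> omega

theorem mem_Icc_of_mem_coreE {E : Finset TEdge} {k : ℕ} {a b : ℤ} {e : TEdge}
    (he : e ∈ coreE E k a b) : e.2.2 ∈ Set.Icc a b :=
  (Finset.mem_filter.1 (Finset.mem_filter.1 he).1).2

theorem stmt_11_general (E : Finset TEdge) (k : ℕ) (Ts Te ts te a b : ℤ)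
    (hmin : IsLeast {t : ℤ | ∃ e ∈ coreE E k ts te, e.2.2 = t} ts)
    (hmax : IsGreatest {t : ℤ | ∃ e ∈ coreE E k ts te, e.2.2 = t} te)
    (hq1 : Ts ≤ a) (hq2 : a ≤ b) (hq3 : b ≤ Te)
    (hid : identCore E k a b ts te) :
    ∃ ts' te' : ℤ, isLTI E k Ts Te ts te ts' te' ∧
      ts' ≤ a ∧ a ≤ ts ∧ te ≤ b ∧ b ≤ te' := by
  obtain ⟨e₁, he₁, he₁ts⟩ := hmin.1
  obtain ⟨e₂, he₂, he₂te⟩ := hmax.1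
  have hats : a ≤ ts := he₁ts ▸ (mem_Icc_of_mem_coreE (hid.2.symm ▸ he₁)).1
  have hteb : te ≤ b := he₂te ▸ (mem_Icc_of_mem_coreE (hid.2.symm ▸ he₂)).2
  obtain ⟨ts', te', hTs', hts', hte', hte'T, hid', hmaximal⟩ :=
    exists_maximal_interval_containing (fun x y => identCore E k x y ts te) hq1 hq3 hid
  exact ⟨ts', te', ⟨hTs', hts'.trans (hq2.trans hte'), hte'T, hid', hmaximal⟩,
    hts', hats, hteb, hte'⟩

/-- every interval inducing a given nonempty temporal k-core
(whose TTI is [ts,te]) lies in a rectangle bounded by the TTI and some LTI. -/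
theorem stmt_11 (E : Finset TEdge) (k : ℕ) (Ts Te ts te a b : ℤ)
    (hTs : Ts ≤ ts) (hTe : te ≤ Te)
    (hne : (coreE E k ts te).Nonempty)
    (hmin : IsLeast {t : ℤ | ∃ e ∈ coreE E k ts te, e.2.2 = t} ts)
    (hmax : IsGreatest {t : ℤ | ∃ e ∈ coreE E k ts te, e.2.2 = t} te)
    (hq1 : Ts ≤ a) (hq2 : a ≤ b) (hq3 : b ≤ Te)
    (hid : identCore E k a b ts te) :
    ∃ ts' te' : ℤ, isLTI E k Ts Te ts te ts' te' ∧
      ts' ≤ a ∧ a ≤ ts ∧ te ≤ b ∧ b ≤ te' :=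
  stmt_11_general E k Ts Te ts te a b hmin hmax hq1 hq2 hq3 hid
end

section
/- Every tightest time interval contained in the query range is contained in each of the loosest time intervals of its core; consequently, any two LTIs of the same temporal k-core have nonempty intersection (they all contain the TTI). -/
/-!
An LTI induces the same core edges as the TTI, and the timestamps of the core edges of an
interval lie in that interval. The endpoints of the TTI are such timestamps, so they lie in
every LTI; in particular the start of the TTI is common to all LTIs.
-/

lemma coreE_times_subset_Icc (E : Finset TEdge) (k : ℕ) (a b : ℤ) :
    {t : ℤ | ∃ e ∈ coreE E k a b, e.2.2 = t} ⊆ Set.Icc a b := by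
  rintro _ ⟨e, he, rfl⟩
  unfold coreE coreEdges projE at he
  simp only [Finset.mem_filter] at he
  exact he.1.2

lemma isLTI.time_mem_Icc {E : Finset TEdge} {k : ℕ} {Ts Te ts te ts' te' t : ℤ}
    (h : isLTI E k Ts Te ts te ts' te') (ht : t ∈ {t : ℤ | ∃ e ∈ coreE E k ts te, e.2.2 = t}) :
    t ∈ Set.Icc ts' te' := by
  obtain ⟨-, -, -, ⟨-, hE⟩, -⟩ := h
  rw [← hE] at ht
  exact coreE_times_subset_Icc E k ts' te' ht

theorem stmt_13_general (E : Finset TEdge) (k : ℕ) (Ts Te ts te : ℤ)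
    (hmin : IsLeast {t : ℤ | ∃ e ∈ coreE E k ts te, e.2.2 = t} ts)
    (hmax : IsGreatest {t : ℤ | ∃ e ∈ coreE E k ts te, e.2.2 = t} te) :
    (∀ ts' te' : ℤ, isLTI E k Ts Te ts te ts' te' → ts' ≤ ts ∧ te ≤ te') ∧
    (∀ ts₁ te₁ ts₂ te₂ : ℤ, isLTI E k Ts Te ts te ts₁ te₁ →
      isLTI E k Ts Te ts te ts₂ te₂ →
      ∃ t : ℤ, ts₁ ≤ t ∧ t ≤ te₁ ∧ ts₂ ≤ t ∧ t ≤ te₂) := by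
  refine ⟨fun ts' te' h => ⟨(h.time_mem_Icc hmin.1).1, (h.time_mem_Icc hmax.1).2⟩, ?_⟩
  intro ts₁ te₁ ts₂ te₂ h₁ h₂
  obtain ⟨hs₁, he₁⟩ := h₁.time_mem_Icc hmin.1
  obtain ⟨hs₂, he₂⟩ := h₂.time_mem_Icc hmin.1
  exact ⟨ts, hs₁, he₁, hs₂, he₂⟩

/-- the TTI is contained in each LTI of its core; consequently any
two LTIs of the same temporal k-core have nonempty intersection. -/
theorem stmt_13 (E : Finset TEdge) (k : ℕ) (Ts Te ts te : ℤ)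
    (hTs : Ts ≤ ts) (hTe : te ≤ Te)
    (hne : (coreE E k ts te).Nonempty)
    (hmin : IsLeast {t : ℤ | ∃ e ∈ coreE E k ts te, e.2.2 = t} ts)
    (hmax : IsGreatest {t : ℤ | ∃ e ∈ coreE E k ts te, e.2.2 = t} te) :
    (∀ ts' te' : ℤ, isLTI E k Ts Te ts te ts' te' → ts' ≤ ts ∧ te ≤ te') ∧
    (∀ ts₁ te₁ ts₂ te₂ : ℤ, isLTI E k Ts Te ts te ts₁ te₁ →
      isLTI E k Ts Te ts te ts₂ te₂ →
      ∃ t : ℤ, ts₁ ≤ t ∧ t ≤ te₁ ∧ ts₂ ≤ t ∧ t ≤ te₂) :=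
  stmt_13_general E k Ts Te ts te hmin hmax
end
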